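/- For all t₁, t₂ ∈ ℝ with π/8 ≤ s₁ − t₁ ≤ π/2 and π/8 ≤ s₁ − t₂ ≤ π/2, one has (1/2)·|t₁ − t₂| ≤ |Ψ(t₁) − Ψ(t₂)| ≤ π·|t₁ − t₂|. -/

import Mathlib

/-! On `[π/8, π/2]`, the derivative of `y ↦ Ψ(s₁ - y) = 2 - 2 cos (a y) + (1 - a²) y²` is
`2a sin (a y) + 2 (1 - a²) y`, which Jordan's inequality `sin x ≥ 2x/π` and `sin x ≤ x` pin
between `4y/π ≥ 1/2` and `2y ≤ π`; the mean value theorem turns these derivative bounds into the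
two Lipschitz bounds. -/

/-- The circular helix `u(s) = (cos as, sin as, √(1−a²)·s)` in `ℝ³` (Euclidean). -/
noncomputable def helix (a : ℝ) (s : ℝ) : EuclideanSpace ℝ (Fin 3) :=
  (WithLp.equiv 2 (Fin 3 → ℝ)).symm
    ![Real.cos (a * s), Real.sin (a * s), Real.sqrt (1 - a ^ 2) * s]

open Real Set

theorem abs_sub_bounds_of_hasDerivAt {D : Set ℝ} (hD : Convex ℝ D) {f f' : ℝ → ℝ}
    (hf : ∀ x, HasDerivAt f (f' x) x) {m M : ℝ} (hm0 : 0 ≤ m)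
    (hm : ∀ x ∈ D, m ≤ f' x) (hM : ∀ x ∈ D, f' x ≤ M) {x y : ℝ} (hx : x ∈ D) (hy : y ∈ D) :
    m * |x - y| ≤ |f x - f y| ∧ |f x - f y| ≤ M * |x - y| := by
  wlog hxy : x ≤ y generalizing x y
  · rw [abs_sub_comm x, abs_sub_comm (f x)]
    exact this hy hx (le_of_not_ge hxy)
  have hderiv : ∀ z, deriv f z = f' z := fun z => (hf z).deriv
  have hdiff : Differentiable ℝ f := fun z => (hf z).differentiableAt
  have hlow : m * (y - x) ≤ f y - f x :=
    hD.mul_sub_le_image_sub_of_le_deriv hdiff.continuous.continuousOn hdiff.differentiableOn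
      (fun z hz => hderiv z ▸ hm z (interior_subset hz)) x hx y hy hxy
  have hupp : f y - f x ≤ M * (y - x) :=
    hD.image_sub_le_mul_sub_of_deriv_le hdiff.continuous.continuousOn hdiff.differentiableOn
      (fun z hz => hderiv z ▸ hM z (interior_subset hz)) x hx y hy hxy
  have hmono : 0 ≤ f y - f x := (mul_nonneg hm0 (sub_nonneg.2 hxy)).trans hlow
  rw [abs_sub_comm x, abs_sub_comm (f x), abs_of_nonneg (sub_nonneg.2 hxy), abs_of_nonneg hmono]
  exact ⟨hlow, hupp⟩

noncomputable def helixChordSq (a y : ℝ) : ℝ :=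
  2 - 2 * cos (a * y) + (1 - a ^ 2) * y ^ 2

theorem norm_helix_sub_helix_sq {a : ℝ} (ha : a ^ 2 ≤ 1) (s t : ℝ) :
    ‖helix a t - helix a s‖ ^ 2 = helixChordSq a (s - t) := by
  rw [EuclideanSpace.norm_eq, sq_sqrt (by positivity)]
  simp only [helix, WithLp.equiv_symm_apply, Fin.sum_univ_three, PiLp.sub_apply,
    Matrix.cons_val_zero, Matrix.cons_val_one, Matrix.head_cons, Matrix.cons_val_two,
    Matrix.tail_cons, Real.norm_eq_abs, sq_abs, helixChordSq]
  have hsqrt : sqrt (1 - a ^ 2) ^ 2 = 1 - a ^ 2 := sq_sqrt (by linarith)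
  rw [show a * (s - t) = a * s - a * t by ring, cos_sub]
  nlinarith [sin_sq_add_cos_sq (a * t), sin_sq_add_cos_sq (a * s)]

theorem hasDerivAt_helixChordSq (a y : ℝ) :
    HasDerivAt (helixChordSq a) (2 * a * sin (a * y) + 2 * (1 - a ^ 2) * y) y := by
  have hcos : HasDerivAt (fun y => cos (a * y)) (-sin (a * y) * a) y :=
    ((hasDerivAt_id y).const_mul a).cos.congr_deriv (by simp)
  have hsq : HasDerivAt (fun y => y ^ 2) (2 * y) y := by simpa using hasDerivAt_pow 2 y
  exact (((hcos.const_mul 2).const_sub 2).add (hsq.const_mul (1 - a ^ 2))).congr_deriv (by ring)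

theorem four_div_pi_mul_le_deriv_helixChordSq {a y : ℝ} (ha0 : 0 ≤ a) (ha1 : a ≤ 1)
    (hy0 : 0 ≤ y) (hy : y ≤ π / 2) :
    4 / π * y ≤ 2 * a * sin (a * y) + 2 * (1 - a ^ 2) * y := by
  have hay : a * y ≤ π / 2 := by nlinarith
  have hjordan : 2 / π * (a * y) ≤ sin (a * y) := mul_le_sin (by positivity) hay
  have hpi : 4 / π ≤ 2 := by rw [div_le_iff₀ pi_pos]; linarith [pi_gt_three]
  have ha2 : a ^ 2 ≤ 1 := by nlinarith
  have hgap : 0 ≤ (1 - a ^ 2) * (2 - 4 / π) * y :=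
    mul_nonneg (mul_nonneg (by linarith) (by linarith)) hy0
  calc 4 / π * y ≤ 4 / π * y * a ^ 2 + 2 * (1 - a ^ 2) * y := by linarith
    _ = 2 * a * (2 / π * (a * y)) + 2 * (1 - a ^ 2) * y := by ring
    _ ≤ 2 * a * sin (a * y) + 2 * (1 - a ^ 2) * y := by gcongr

theorem deriv_helixChordSq_le_two_mul {a y : ℝ} (ha0 : 0 ≤ a) (hy0 : 0 ≤ y) :
    2 * a * sin (a * y) + 2 * (1 - a ^ 2) * y ≤ 2 * y := by
  have : a * sin (a * y) ≤ a * (a * y) :=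
    mul_le_mul_of_nonneg_left (sin_le (by positivity)) ha0
  nlinarith

/-- for `t₁, t₂` with `π/8 ≤ s₁ − tᵢ ≤ π/2`,
`(1/2)|t₁ − t₂| ≤ |Ψ(t₁) − Ψ(t₂)| ≤ π|t₁ − t₂|`, where `Ψ(s) = ‖u(s) − u(s₁)‖²`. -/
theorem statement13 (a : ℝ) (ha0 : 0 < a) (ha1 : a < 1) (s₁ : ℝ) :
    ∀ t₁ t₂ : ℝ,
      Real.pi / 8 ≤ s₁ - t₁ → s₁ - t₁ ≤ Real.pi / 2 →
      Real.pi / 8 ≤ s₁ - t₂ → s₁ - t₂ ≤ Real.pi / 2 →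
      (1 / 2) * |t₁ - t₂| ≤
          |‖helix a t₁ - helix a s₁‖ ^ 2 - ‖helix a t₂ - helix a s₁‖ ^ 2| ∧
        |‖helix a t₁ - helix a s₁‖ ^ 2 - ‖helix a t₂ - helix a s₁‖ ^ 2| ≤
          Real.pi * |t₁ - t₂| := by
  intro t₁ t₂ h₁ h₁' h₂ h₂'
  have ha : a ^ 2 ≤ 1 := by nlinarith
  have hlow : ∀ y ∈ Icc (π / 8) (π / 2), 1 / 2 ≤ 2 * a * sin (a * y) + 2 * (1 - a ^ 2) * y :=
    fun y ⟨hy, hy'⟩ => by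
      have hscale : 4 / π * (π / 8) = 1 / 2 := by field_simp; norm_num
      have hmono : 4 / π * (π / 8) ≤ 4 / π * y := by gcongr
      linarith [four_div_pi_mul_le_deriv_helixChordSq ha0.le ha1.le (by linarith [pi_pos]) hy']
  have hupp : ∀ y ∈ Icc (π / 8) (π / 2), 2 * a * sin (a * y) + 2 * (1 - a ^ 2) * y ≤ π :=
    fun y ⟨hy, hy'⟩ => by
      linarith [deriv_helixChordSq_le_two_mul (y := y) ha0.le (by linarith [pi_pos])]
  have := abs_sub_bounds_of_hasDerivAt (convex_Icc (π / 8) (π / 2)) (hasDerivAt_helixChordSq a)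
    (by norm_num) hlow hupp (x := s₁ - t₁) (y := s₁ - t₂) ⟨h₁, h₁'⟩ ⟨h₂, h₂'⟩
  rwa [sub_sub_sub_cancel_left, abs_sub_comm t₂, ← norm_helix_sub_helix_sq ha,
    ← norm_helix_sub_helix_sq ha] at this
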